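/- Fix a sequence of request patterns (x_i)_{i≥1}, a time t ≥ 1, and two distinct feasible cache configurations s, s' ∈ S. For the FTPL coded caching policy with learning rates η_t = α√t, the probability over the Gaussian perturbation γ that the selections satisfy s_t(γ) = s' and s_{t+1}(γ) = s is at most 3·r_max / (2·α·√(2π)·√(t+1)). -/
import Mathlib


open MeasureTheory ProbabilityTheory

noncomputable section

namespace CodedCaching

/-- The finite set of feasible cache configurations: binary vectors (entries in `{0,1}`)
with at least `M` ones. -/
def configs (N M : ℕ) : Finset (Fin N → ℕ) :=
  (Fintype.piFinset fun _ : Fin N => Finset.range 2).filter fun s => M ≤ ∑ i, s i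

/-- The finite set of request patterns: `ℕ`-valued vectors whose entries sum to `K`. -/
def requests (N K : ℕ) : Finset (Fin N → ℕ) :=
  (Fintype.piFinset fun _ : Fin N => Finset.range (K + 1)).filter fun x => ∑ i, x i = K

/-- The truncated request vector `y = min(x, 1_N)`, viewed as a real vector. -/
def trunc {N : ℕ} (x : Fin N → ℕ) : Fin N → ℝ := fun i => (min (x i) 1 : ℕ)

/-- The coded part of the expected transmission rate:
`(⟨s,1⟩/M − 1)·(1 − (1 − M/⟨s,1⟩)^⟨x,s⟩)`. -/
def codedRate {N : ℕ} (M : ℕ) (s x : Fin N → ℕ) : ℝ :=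
  ((∑ i, (s i : ℝ)) / M - 1) *
    (1 - (1 - (M : ℝ) / ∑ i, (s i : ℝ)) ^ (∑ i, x i * s i))

/-- The expected transmission rate `K(s,x) = ⟨1_N − s, y⟩ + codedRate`. -/
def rate {N : ℕ} (M : ℕ) (s x : Fin N → ℕ) : ℝ :=
  (∑ i, (1 - (s i : ℝ)) * trunc x i) + codedRate M s x

/-- The common component value of the vector `f(x,s)`:
`(1/M)·(1 − (1 − M/⟨s,1⟩)^⟨x,s⟩)`. -/
def fcomp {N : ℕ} (M : ℕ) (x s : Fin N → ℕ) : ℝ :=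
  (1 / M) * (1 - (1 - (M : ℝ) / ∑ i, (s i : ℝ)) ^ (∑ i, x i * s i))

/-- `r_max`: the maximum of the rate over feasible configurations and request patterns. -/
def rmax (N K M : ℕ) : ℝ :=
  sSup {r : ℝ | ∃ s ∈ configs N M, ∃ x ∈ requests N K, r = rate M s x}

/-- `r_max^C`: the maximum of the coded rate over feasible configurations and requests. -/
def rmaxC (N K M : ℕ) : ℝ :=
  sSup {r : ℝ | ∃ s ∈ configs N M, ∃ x ∈ requests N K, r = codedRate M s x}

/-- The standard Gaussian measure `N(0, I_N)` on `ℝ^N`. -/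
def gauss (N : ℕ) : Measure (Fin N → ℝ) :=
  Measure.pi fun _ => gaussianReal 0 1

/-- The Gaussian width constant `G_max = E_γ[max_{s ∈ S} ⟨s, γ⟩]`. -/
def gmax (N M : ℕ) : ℝ :=
  ∫ γ, sSup {r : ℝ | ∃ s ∈ configs N M, r = ∑ i, (s i : ℝ) * γ i} ∂gauss N

/-- The FTPL objective at time `t` with learning rate `η` and perturbation `γ`:
`⟨ s − (M/N)·1_N , ∑_{i=1}^{t−1} f(x_i, s) − Y_t + η·γ ⟩` where `Y_t = ∑_{i=1}^{t−1} y_i`. -/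
def obj {N : ℕ} (M : ℕ) (x : ℕ → Fin N → ℕ) (η : ℝ) (t : ℕ)
    (γ : Fin N → ℝ) (s : Fin N → ℕ) : ℝ :=
  ∑ j, ((s j : ℝ) - (M : ℝ) / N) *
    ((∑ i ∈ Finset.Ico 1 t, fcomp M (x i) s)
      - (∑ i ∈ Finset.Ico 1 t, trunc (x i) j) + η * γ j)

/-- The FTPL policy: a measurable selection `σ t γ` of a minimizer of the perturbed
cumulative cost over the feasible configurations, for learning-rate schedule `η`. -/
def IsFTPL {N : ℕ} (M : ℕ) (η : ℕ → ℝ) (x : ℕ → Fin N → ℕ)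
    (σ : ℕ → (Fin N → ℝ) → Fin N → ℕ) : Prop :=
  (∀ t, Measurable (σ t)) ∧ (∀ t γ, σ t γ ∈ configs N M) ∧
    ∀ t γ, ∀ s ∈ configs N M, obj M x (η t) t γ (σ t γ) ≤ obj M x (η t) t γ s

/-- The regret of a (randomly perturbed) policy `σ` on the request sequence `x`
over horizon `T`, with respect to the best static configuration in hindsight. -/
def regret {N : ℕ} (M : ℕ) (x : ℕ → Fin N → ℕ)
    (σ : ℕ → (Fin N → ℝ) → Fin N → ℕ) (T : ℕ) : ℝ :=
  (∑ t ∈ Finset.Icc 1 T, ∫ γ, rate M (σ t γ) (x t) ∂gauss N)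
    - sInf {r : ℝ | ∃ s ∈ configs N M, r = ∑ t ∈ Finset.Icc 1 T, rate M s (x t)}

/-- The expected number of cache-configuration switches of the policy `σ` up to time `T`. -/
def switchCount {N : ℕ} (σ : ℕ → (Fin N → ℝ) → Fin N → ℕ) (T : ℕ) : ℝ :=
  ∫ γ, (∑ t ∈ Finset.Icc 1 (T - 1), if σ (t + 1) γ = σ t γ then (0 : ℝ) else 1) ∂gauss N

open scoped NNReal in
lemma gauss_Icc_le (p q : ℝ) :
    gaussianReal 0 1 (Set.Icc p q) ≤ ENNReal.ofReal ((q - p) / Real.sqrt (2 * Real.pi)) := by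
  rw [gaussianReal_apply 0 one_ne_zero]
  have hb : ∀ x : ℝ, gaussianPDF 0 1 x ≤ ENNReal.ofReal ((Real.sqrt (2 * Real.pi))⁻¹) := by
    intro x
    rw [gaussianPDF]
    refine ENNReal.ofReal_le_ofReal ?_
    rw [gaussianPDFReal]
    have h1 : Real.exp (-(x - 0) ^ 2 / (2 * (1 : ℝ≥0))) ≤ 1 := by
      rw [Real.exp_le_one_iff]
      push_cast
      nlinarith [sq_nonneg (x - 0)]
    calc (Real.sqrt (2 * Real.pi * (1:ℝ≥0)))⁻¹ * Real.exp (-(x - 0) ^ 2 / (2 * (1:ℝ≥0)))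
        ≤ (Real.sqrt (2 * Real.pi * (1:ℝ≥0)))⁻¹ * 1 := by
          refine mul_le_mul_of_nonneg_left h1 (by positivity)
      _ = (Real.sqrt (2 * Real.pi))⁻¹ := by push_cast; rw [mul_one, mul_one]
  calc ∫⁻ x in Set.Icc p q, gaussianPDF 0 1 x
      ≤ ∫⁻ _ in Set.Icc p q, ENNReal.ofReal ((Real.sqrt (2 * Real.pi))⁻¹) :=
        lintegral_mono fun x => hb x
    _ = ENNReal.ofReal ((Real.sqrt (2 * Real.pi))⁻¹) * volume (Set.Icc p q) := by
        rw [setLIntegral_const]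
    _ ≤ ENNReal.ofReal ((q - p) / Real.sqrt (2 * Real.pi)) := by
        rw [Real.volume_Icc, ← ENNReal.ofReal_mul (by positivity)]
        exact ENNReal.ofReal_le_ofReal (by rw [div_eq_inv_mul])

lemma slab_bound (n : ℕ) (a : Fin (n + 1) → ℝ) (j0 : Fin (n + 1))
    (ha : a j0 = 1 ∨ a j0 = -1) (L U : ℝ) :
    gauss (n + 1) {γ | L ≤ ∑ j, a j * γ j ∧ ∑ j, a j * γ j ≤ U} ≤
      ENNReal.ofReal ((U - L) / Real.sqrt (2 * Real.pi)) := by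
  set e := MeasurableEquiv.piFinSuccAbove (fun _ : Fin (n + 1) => ℝ) j0 with he
  have hmp := measurePreserving_piFinSuccAbove (fun _ : Fin (n + 1) => gaussianReal 0 1) j0
  set B : Set (ℝ × (Fin n → ℝ)) :=
    {p | L ≤ a j0 * p.1 + ∑ j, a (j0.succAbove j) * p.2 j ∧
          a j0 * p.1 + ∑ j, a (j0.succAbove j) * p.2 j ≤ U} with hB
  have hmeasB : MeasurableSet B := by
    have hg : Measurable fun p : ℝ × (Fin n → ℝ) =>
        a j0 * p.1 + ∑ j, a (j0.succAbove j) * p.2 j := by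
      apply Measurable.add
      · exact measurable_fst.const_mul _
      · exact Finset.measurable_sum _ fun j _ =>
          ((measurable_pi_apply j).comp measurable_snd).const_mul _
    exact (measurableSet_le measurable_const hg).inter (measurableSet_le hg measurable_const)
  have hpre : {γ : Fin (n+1) → ℝ | L ≤ ∑ j, a j * γ j ∧ ∑ j, a j * γ j ≤ U} = e ⁻¹' B := by
    ext γ
    have hsum : ∑ j, a j * γ j
        = a j0 * γ j0 + ∑ j, a (j0.succAbove j) * γ (j0.succAbove j) :=
      Fin.sum_univ_succAbove (fun j => a j * γ j) j0
    simp only [Set.mem_setOf_eq, Set.mem_preimage, hB, he,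
      MeasurableEquiv.piFinSuccAbove_apply, hsum]
    rfl
  rw [show gauss (n + 1) = Measure.pi fun _ => gaussianReal 0 1 from rfl, hpre,
    hmp.measure_preimage hmeasB.nullMeasurableSet,
    Measure.prod_apply_symm hmeasB]
  have hslice : ∀ y : Fin n → ℝ,
      gaussianReal 0 1 ((fun x => (x, y)) ⁻¹' B) ≤
        ENNReal.ofReal ((U - L) / Real.sqrt (2 * Real.pi)) := by
    intro y
    set R := ∑ j, a (j0.succAbove j) * y j with hR
    rcases ha with h1 | h1
    · have : ((fun x => (x, y)) ⁻¹' B) = Set.Icc (L - R) (U - R) := by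
        ext c; simp only [Set.mem_preimage, hB, Set.mem_setOf_eq, Set.mem_Icc, h1, one_mul]
        constructor <;> rintro ⟨hl, hu⟩ <;> constructor <;> linarith
      rw [this]
      simpa using gauss_Icc_le (L - R) (U - R)
    · have : ((fun x => (x, y)) ⁻¹' B) = Set.Icc (R - U) (R - L) := by
        ext c; simp only [Set.mem_preimage, hB, Set.mem_setOf_eq, Set.mem_Icc, h1]
        constructor <;> rintro ⟨hl, hu⟩ <;> constructor <;> linarith
      rw [this]
      simpa using gauss_Icc_le (R - U) (R - L)
  calc ∫⁻ y, gaussianReal 0 1 ((fun x => (x, y)) ⁻¹' B)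
          ∂(Measure.pi fun _ : Fin n => gaussianReal 0 1)
      ≤ ∫⁻ _, ENNReal.ofReal ((U - L) / Real.sqrt (2 * Real.pi))
          ∂(Measure.pi fun _ : Fin n => gaussianReal 0 1) :=
        lintegral_mono hslice
    _ = ENNReal.ofReal ((U - L) / Real.sqrt (2 * Real.pi)) := by
        rw [lintegral_const, measure_univ, mul_one]

lemma configs_le_one {N M : ℕ} {s : Fin N → ℕ} (hs : s ∈ configs N M) (i : Fin N) :
    s i ≤ 1 := by
  have := (Finset.mem_filter.1 hs).1
  have h := (Fintype.mem_piFinset.1 this) i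
  simpa [Nat.lt_succ_iff] using Finset.mem_range.1 h

lemma configs_sum_ge {N M : ℕ} {s : Fin N → ℕ} (hs : s ∈ configs N M) : M ≤ ∑ i, s i :=
  (Finset.mem_filter.1 hs).2

lemma rate_nonneg {N : ℕ} {M : ℕ} (hM : 0 < M) {s : Fin N → ℕ} (hs : s ∈ configs N M)
    (x : Fin N → ℕ) : 0 ≤ rate M s x := by
  have hsum : (M : ℝ) ≤ ∑ i, (s i : ℝ) := by
    have := configs_sum_ge hs; exact_mod_cast this
  have hMpos : (0 : ℝ) < M := by exact_mod_cast hM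
  have hSpos : (0 : ℝ) < ∑ i, (s i : ℝ) := lt_of_lt_of_le hMpos hsum
  apply add_nonneg
  · refine Finset.sum_nonneg fun i _ => mul_nonneg ?_ (by unfold trunc; positivity)
    have h1 := configs_le_one hs i
    have : (s i : ℝ) ≤ 1 := by exact_mod_cast h1
    linarith
  · apply mul_nonneg
    · rw [sub_nonneg, le_div_iff₀ hMpos]; linarith
    · rw [sub_nonneg]
      apply pow_le_one₀
      · rw [sub_nonneg, div_le_one hSpos]; exact hsum
      · have : 0 ≤ (M : ℝ) / ∑ i, (s i : ℝ) := by positivity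
        linarith

lemma rate_le_rmax {N K M : ℕ} {s x : Fin N → ℕ} (hs : s ∈ configs N M)
    (hx : x ∈ requests N K) : rate M s x ≤ rmax N K M := by
  have hfin : {r : ℝ | ∃ s ∈ configs N M, ∃ x ∈ requests N K, r = rate M s x}.Finite := by
    have hsub : {r : ℝ | ∃ s ∈ configs N M, ∃ x ∈ requests N K, r = rate M s x} ⊆
        (fun p : (Fin N → ℕ) × (Fin N → ℕ) => rate M p.1 p.2) ''
          (↑(configs N M) ×ˢ ↑(requests N K)) := by
      rintro r ⟨s, hs, x, hx, rfl⟩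
      exact ⟨(s, x), ⟨hs, hx⟩, rfl⟩
    exact (((configs N M).finite_toSet.prod (requests N K).finite_toSet).image _).subset hsub
  exact le_csSup hfin.bddAbove ⟨s, hs, x, hx, rfl⟩

lemma per_slot {N : ℕ} {M : ℕ} (hM : 0 < M) (hN : 0 < N) (s xv : Fin N → ℕ) :
    ((∑ i, (s i : ℝ)) - M) * fcomp M xv s - ∑ j, ((s j : ℝ) - (M : ℝ) / N) * trunc xv j
      = rate M s xv - (1 - (M : ℝ) / N) * ∑ j, trunc xv j := by
  have hM' : (M : ℝ) ≠ 0 := Nat.cast_ne_zero.2 hM.ne'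
  have hN' : (N : ℝ) ≠ 0 := Nat.cast_ne_zero.2 hN.ne'
  have h1 : ∑ j, ((s j : ℝ) - (M : ℝ) / N) * trunc xv j
      = (∑ j, (s j : ℝ) * trunc xv j) - ((M : ℝ) / N) * ∑ j, trunc xv j := by
    rw [Finset.mul_sum, ← Finset.sum_sub_distrib]
    exact Finset.sum_congr rfl fun j _ => by ring
  have h2 : ∑ j, (1 - (s j : ℝ)) * trunc xv j
      = (∑ j, trunc xv j) - ∑ j, (s j : ℝ) * trunc xv j := by
    rw [← Finset.sum_sub_distrib]
    exact Finset.sum_congr rfl fun j _ => by ring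
  rw [h1, rate, h2, fcomp, codedRate]
  set p := (1 - (M : ℝ) / ∑ i, (s i : ℝ)) ^ (∑ i, xv i * s i) with hp
  field_simp
  ring

/-- The `γ`-free part of the FTPL objective. -/
def bpart {N : ℕ} (M : ℕ) (x : ℕ → Fin N → ℕ) (t : ℕ) (s : Fin N → ℕ) : ℝ :=
  ∑ j, ((s j : ℝ) - (M : ℝ) / N) *
    ((∑ i ∈ Finset.Ico 1 t, fcomp M (x i) s) - ∑ i ∈ Finset.Ico 1 t, trunc (x i) j)

lemma obj_split {N : ℕ} (M : ℕ) (x : ℕ → Fin N → ℕ) (η : ℝ) (t : ℕ)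
    (γ : Fin N → ℝ) (s : Fin N → ℕ) :
    obj M x η t γ s = bpart M x t s + η * ∑ j, ((s j : ℝ) - (M : ℝ) / N) * γ j := by
  rw [obj, bpart, Finset.mul_sum, ← Finset.sum_add_distrib]
  exact Finset.sum_congr rfl fun j _ => by ring

lemma bpart_eq_sum {N : ℕ} {M : ℕ} (hM : 0 < M) (hN : 0 < N) (x : ℕ → Fin N → ℕ)
    (t : ℕ) (s : Fin N → ℕ) :
    bpart M x t s = ∑ i ∈ Finset.Ico 1 t,
      (rate M s (x i) - (1 - (M : ℝ) / N) * ∑ j, trunc (x i) j) := by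
  have hN' : (N : ℝ) ≠ 0 := Nat.cast_ne_zero.2 hN.ne'
  have hSM : ∑ j : Fin N, ((s j : ℝ) - (M : ℝ) / N) = (∑ j, (s j : ℝ)) - M := by
    rw [Finset.sum_sub_distrib, Finset.sum_const, Finset.card_univ, Fintype.card_fin,
      nsmul_eq_mul]
    field_simp
  have hstep : bpart M x t s = ∑ i ∈ Finset.Ico 1 t,
      (((∑ j, (s j : ℝ)) - M) * fcomp M (x i) s
        - ∑ j, ((s j : ℝ) - (M : ℝ) / N) * trunc (x i) j) := by
    rw [bpart]
    calc ∑ j, ((s j : ℝ) - (M : ℝ) / N) *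
          ((∑ i ∈ Finset.Ico 1 t, fcomp M (x i) s) - ∑ i ∈ Finset.Ico 1 t, trunc (x i) j)
        = ∑ j, ∑ i ∈ Finset.Ico 1 t,
            (((s j : ℝ) - (M : ℝ) / N) * fcomp M (x i) s
              - ((s j : ℝ) - (M : ℝ) / N) * trunc (x i) j) := by
          refine Finset.sum_congr rfl fun j _ => ?_
          rw [Finset.sum_sub_distrib, ← Finset.mul_sum, ← Finset.mul_sum, mul_sub]
      _ = ∑ i ∈ Finset.Ico 1 t, ∑ j,
            (((s j : ℝ) - (M : ℝ) / N) * fcomp M (x i) s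
              - ((s j : ℝ) - (M : ℝ) / N) * trunc (x i) j) := Finset.sum_comm
      _ = ∑ i ∈ Finset.Ico 1 t,
            (((∑ j, (s j : ℝ)) - M) * fcomp M (x i) s
              - ∑ j, ((s j : ℝ) - (M : ℝ) / N) * trunc (x i) j) := by
          refine Finset.sum_congr rfl fun i _ => ?_
          rw [Finset.sum_sub_distrib, ← Finset.sum_mul, hSM]
  rw [hstep]
  exact Finset.sum_congr rfl fun i _ => per_slot hM hN s (x i)

lemma bpart_diff {N : ℕ} {M : ℕ} (hM : 0 < M) (hN : 0 < N) (x : ℕ → Fin N → ℕ)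
    (t : ℕ) (s s' : Fin N → ℕ) :
    bpart M x t s' - bpart M x t s
      = ∑ i ∈ Finset.Ico 1 t, (rate M s' (x i) - rate M s (x i)) := by
  rw [bpart_eq_sum hM hN x t s', bpart_eq_sum hM hN x t s, ← Finset.sum_sub_distrib]
  exact Finset.sum_congr rfl fun i _ => by ring

lemma slab_incl {N : ℕ} (M : ℕ) (x : ℕ → Fin N → ℕ) (η1 η2 : ℝ)
    (hη1 : 0 < η1) (hη2 : 0 < η2) (t : ℕ) (γ : Fin N → ℝ) (s s' : Fin N → ℕ)
    (o1 : obj M x η1 t γ s' ≤ obj M x η1 t γ s)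
    (o2 : obj M x η2 (t + 1) γ s ≤ obj M x η2 (t + 1) γ s') :
    (bpart M x t s' - bpart M x t s) / η1 ≤ (∑ j, ((s j : ℝ) - (s' j : ℝ)) * γ j) ∧
      (∑ j, ((s j : ℝ) - (s' j : ℝ)) * γ j)
        ≤ (bpart M x (t + 1) s' - bpart M x (t + 1) s) / η2 := by
  rw [obj_split, obj_split] at o1 o2
  have hAB : (∑ j, ((s j : ℝ) - (M : ℝ) / N) * γ j)
      - (∑ j, ((s' j : ℝ) - (M : ℝ) / N) * γ j)
      = ∑ j, ((s j : ℝ) - (s' j : ℝ)) * γ j := by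
    rw [← Finset.sum_sub_distrib]
    exact Finset.sum_congr rfl fun j _ => by ring
  constructor
  · rw [div_le_iff₀ hη1, mul_comm]
    have h1 : η1 * (∑ j, ((s j : ℝ) - (M : ℝ) / N) * γ j)
        - η1 * (∑ j, ((s' j : ℝ) - (M : ℝ) / N) * γ j)
        = η1 * ∑ j, ((s j : ℝ) - (s' j : ℝ)) * γ j := by
      rw [← mul_sub, hAB]
    linarith
  · rw [le_div_iff₀ hη2, mul_comm]
    have h2 : η2 * (∑ j, ((s j : ℝ) - (M : ℝ) / N) * γ j)
        - η2 * (∑ j, ((s' j : ℝ) - (M : ℝ) / N) * γ j)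
        = η2 * ∑ j, ((s j : ℝ) - (s' j : ℝ)) * γ j := by
      rw [← mul_sub, hAB]
    linarith

lemma width_bound (Rm D δ η1 η2 c : ℝ) (hRm : 0 ≤ Rm) (hη1 : 0 < η1) (hη2 : 0 < η2)
    (h12 : η1 ≤ η2) (hD : -(c * Rm) ≤ D) (hδ : δ ≤ Rm)
    (hkey : c * (η2 - η1) ≤ η1 / 2) :
    (D + δ) / η2 - D / η1 ≤ 3 / 2 * Rm / η2 := by
  have e1 : (D + δ) / η2 - D / η1 = δ / η2 + (D * (η1 - η2)) / (η1 * η2) := by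
    field_simp; ring
  have t1 : δ / η2 ≤ Rm / η2 := by gcongr
  have t2 : D * (η1 - η2) ≤ (c * Rm) * (η2 - η1) := by
    nlinarith [mul_le_mul_of_nonpos_right hD (show η1 - η2 ≤ 0 by linarith)]
  have t3 : (c * Rm) * (η2 - η1) ≤ Rm * (η1 / 2) := by nlinarith
  have t4 : (D * (η1 - η2)) / (η1 * η2) ≤ (Rm * (η1 / 2)) / (η1 * η2) :=
    (div_le_div_iff_of_pos_right (mul_pos hη1 hη2)).2 (t2.trans t3)
  have t5 : (Rm * (η1 / 2)) / (η1 * η2) = Rm / (2 * η2) := by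
    field_simp
  have t6 : Rm / η2 + Rm / (2 * η2) = 3 / 2 * Rm / η2 := by
    field_simp; ring
  linarith [e1, t1, t4]

lemma sqrt_key (t : ℕ) (ht : 1 ≤ t) :
    ((t : ℝ) - 1) * (Real.sqrt (t + 1) - Real.sqrt t) ≤ Real.sqrt t / 2 := by
  have ht1 : (1 : ℝ) ≤ (t : ℝ) := by exact_mod_cast ht
  set u := Real.sqrt t with hu
  set v := Real.sqrt (t + 1) with hv
  have hu2 : u ^ 2 = t := Real.sq_sqrt (by linarith)
  have hv2 : v ^ 2 = (t : ℝ) + 1 := Real.sq_sqrt (by linarith)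
  have hu1 : 1 ≤ u := by
    rw [hu, show (1 : ℝ) = Real.sqrt 1 by rw [Real.sqrt_one]]
    exact Real.sqrt_le_sqrt ht1
  have huv : u ≤ v := Real.sqrt_le_sqrt (by linarith)
  have hvu : (v - u) * (v + u) = 1 := by nlinarith [hu2, hv2]
  nlinarith [hvu, huv, hu1, mul_le_mul_of_nonneg_left huv (by linarith : (0:ℝ) ≤ u)]


/-- Switching-probability lemma: for the FTPL policy with learning rates `η_t = α√t`,
for any time `t ≥ 1` and distinct feasible configurations `s ≠ s'`, the probability
(over the Gaussian perturbation) that `s_t(γ) = s'` and `s_{t+1}(γ) = s` is at most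
`3·r_max / (2·α·√(2π)·√(t+1))`. -/
theorem ftpl_switching_prob (N K M : ℕ)
    (hN : 0 < N) (hK : 0 < K) (hM : 0 < M) (hMN : M ≤ N) (α : ℝ) (hα : 0 < α)
    (x : ℕ → Fin N → ℕ) (hx : ∀ t, x t ∈ requests N K)
    (σ : ℕ → (Fin N → ℝ) → Fin N → ℕ)
    (hσ : IsFTPL M (fun t => α * Real.sqrt t) x σ)
    (t : ℕ) (ht : 1 ≤ t)
    (s s' : Fin N → ℕ) (hs : s ∈ configs N M) (hs' : s' ∈ configs N M) (hne : s ≠ s') :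
    gauss N {γ | σ t γ = s' ∧ σ (t + 1) γ = s}
      ≤ ENNReal.ofReal
          (3 * rmax N K M / (2 * α * Real.sqrt (2 * Real.pi) * Real.sqrt (t + 1))) := by
  -- setup
  obtain ⟨n, rfl⟩ : ∃ n, N = n + 1 := ⟨N - 1, (Nat.succ_pred_eq_of_pos hN).symm⟩
  obtain ⟨hmeasσ, hfeasσ, hopt⟩ := hσ
  have ht1 : (1 : ℝ) ≤ (t : ℝ) := by exact_mod_cast ht
  have hst : (1 : ℝ) ≤ Real.sqrt t := by
    rw [show (1 : ℝ) = Real.sqrt 1 by rw [Real.sqrt_one]]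
    exact Real.sqrt_le_sqrt ht1
  have hη1 : 0 < α * Real.sqrt t := mul_pos hα (by linarith)
  have hη2 : 0 < α * Real.sqrt (t + 1) := mul_pos hα (by
    have : Real.sqrt t ≤ Real.sqrt (t + 1) := Real.sqrt_le_sqrt (by linarith)
    linarith)
  have h12 : α * Real.sqrt t ≤ α * Real.sqrt (t + 1) := by
    have : Real.sqrt t ≤ Real.sqrt (t + 1) := Real.sqrt_le_sqrt (by linarith)
    nlinarith
  -- the slab
  set L : ℝ := (bpart M x t s' - bpart M x t s) / (α * Real.sqrt t) with hL
  set U : ℝ := (bpart M x (t + 1) s' - bpart M x (t + 1) s) / (α * Real.sqrt (t + 1)) with hU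
  have hsub : {γ | σ t γ = s' ∧ σ (t + 1) γ = s} ⊆
      {γ : Fin (n + 1) → ℝ | L ≤ ∑ j, ((s j : ℝ) - (s' j : ℝ)) * γ j ∧
        (∑ j, ((s j : ℝ) - (s' j : ℝ)) * γ j) ≤ U} := by
    rintro γ ⟨h1, h2⟩
    have o1 : obj M x (α * Real.sqrt t) t γ s' ≤ obj M x (α * Real.sqrt t) t γ s := by
      have := hopt t γ s hs; rwa [h1] at this
    have o2 : obj M x (α * Real.sqrt (t + 1)) (t + 1) γ s ≤
        obj M x (α * Real.sqrt (t + 1)) (t + 1) γ s' := by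
      have := hopt (t + 1) γ s' hs'
      rw [h2] at this
      exact_mod_cast this
    exact slab_incl M x _ _ hη1 hη2 t γ s s' o1 o2
  -- pick a coordinate where s and s' differ
  obtain ⟨j0, hj0⟩ : ∃ j, s j ≠ s' j := Function.ne_iff.1 hne
  have ha : ((s j0 : ℝ) - (s' j0 : ℝ)) = 1 ∨ ((s j0 : ℝ) - (s' j0 : ℝ)) = -1 := by
    have h1 := configs_le_one hs j0
    have h2 := configs_le_one hs' j0
    have : (s j0 = 1 ∧ s' j0 = 0) ∨ (s j0 = 0 ∧ s' j0 = 1) := by omega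
    rcases this with ⟨e1, e2⟩ | ⟨e1, e2⟩
    · left; rw [e1, e2]; norm_num
    · right; rw [e1, e2]; norm_num
  -- measure bound via the slab
  have hmeas := (measure_mono hsub).trans
    (slab_bound n (fun j => (s j : ℝ) - (s' j : ℝ)) j0 ha L U)
  refine hmeas.trans (ENNReal.ofReal_le_ofReal ?_)
  -- numeric bound on the width
  have hNpos : 0 < n + 1 := Nat.succ_pos n
  have hRm0 : 0 ≤ rmax (n + 1) K M :=
    le_trans (rate_nonneg hM hs (x 1)) (rate_le_rmax hs (hx 1))
  have hdiff : ∀ u : ℕ, bpart M x u s' - bpart M x u s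
      = ∑ i ∈ Finset.Ico 1 u, (rate M s' (x i) - rate M s (x i)) :=
    fun u => bpart_diff hM hNpos x u s s'
  set D : ℝ := ∑ i ∈ Finset.Ico 1 t, (rate M s' (x i) - rate M s (x i)) with hDdef
  have hDlb : -((((t : ℝ) - 1)) * rmax (n + 1) K M) ≤ D := by
    have hterm : ∀ i ∈ Finset.Ico 1 t, -(rmax (n + 1) K M) ≤ rate M s' (x i) - rate M s (x i) := by
      intro i _
      have := rate_nonneg hM hs' (x i)
      have := rate_le_rmax hs (hx i)
      linarith
    have hcard := Finset.card_nsmul_le_sum (Finset.Ico 1 t) _ _ hterm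
    rw [Nat.card_Ico, nsmul_eq_mul] at hcard
    have hc : ((t - 1 : ℕ) : ℝ) = (t : ℝ) - 1 := by
      rw [Nat.cast_sub ht]; norm_num
    rw [hc] at hcard
    calc -(((t : ℝ) - 1) * rmax (n + 1) K M) = ((t : ℝ) - 1) * -(rmax (n + 1) K M) := by ring
      _ ≤ D := hcard
  have hδub : rate M s' (x t) - rate M s (x t) ≤ rmax (n + 1) K M := by
    have := rate_le_rmax hs' (hx t)
    have := rate_nonneg hM hs (x t)
    linarith
  have hkey : ((t : ℝ) - 1) * ((α * Real.sqrt (t + 1)) - (α * Real.sqrt t))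
      ≤ (α * Real.sqrt t) / 2 := by
    have := sqrt_key t ht
    nlinarith
  have hw : U - L ≤ 3 / 2 * rmax (n + 1) K M / (α * Real.sqrt (t + 1)) := by
    have hUD : U = (D + (rate M s' (x t) - rate M s (x t))) / (α * Real.sqrt (t + 1)) := by
      rw [hU, hdiff (t + 1), Finset.sum_Ico_succ_top ht, hDdef]
    have hLD : L = D / (α * Real.sqrt t) := by rw [hL, hdiff t, hDdef]
    rw [hUD, hLD]
    exact width_bound _ _ _ _ _ _ hRm0 hη1 hη2 h12 hDlb hδub hkey
  have hsqrt2pi : 0 < Real.sqrt (2 * Real.pi) := Real.sqrt_pos.2 (by positivity)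
  calc (U - L) / Real.sqrt (2 * Real.pi)
      ≤ (3 / 2 * rmax (n + 1) K M / (α * Real.sqrt (t + 1))) / Real.sqrt (2 * Real.pi) := by
        gcongr
    _ = 3 * rmax (n + 1) K M / (2 * α * Real.sqrt (2 * Real.pi) * Real.sqrt (t + 1)) := by
        have h1 : Real.sqrt (t + 1) ≠ 0 := by positivity
        rw [div_div, show 2 * α * Real.sqrt (2 * Real.pi) * Real.sqrt (t + 1)
            = 2 * (α * Real.sqrt (t + 1) * Real.sqrt (2 * Real.pi)) by ring,
          div_eq_div_iff (by positivity) (by positivity)]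
        ring


end CodedCaching
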